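/- arXiv:1710.07632 — 3 statements merged into one kernel-verified Lean document; each statement's English description precedes it below -/
import Mathlib

section
/- Macaulay's function is strictly monotone: for nonnegative integers a, b and a positive integer d, if a < b then a^{⟨d⟩} < b^{⟨d⟩}. -/
/-!
On each block `C(k, d+1) ≤ a < C(k+1, d+1)` the greedy representation keeps its leading term,
so `a^{⟨d+1⟩} = C(k+1, d+2) + (a - C(k, d+1))^{⟨d⟩}` and strict monotonicity within the block
follows from that of the remainder term, by induction on `d`. Crossing a block boundary
`a + 1 = C(k+1, d+1)` the value jumps to `C(k+2, d+2)`, which exceeds `a^{⟨d+1⟩}` because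
`x < C(n, d)` implies `x^{⟨d⟩} < C(n+1, d+1)`.
-/

/-- Macaulay's function `a^{⟨d⟩}`: writing `a` in its Macaulay `d`-binomial representation
`a = C(k_d, d) + C(k_{d-1}, d-1) + ⋯ + C(k_j, j)` (computed greedily: `k_d` is the largest
integer with `C(k_d, d) ≤ a`), we set `a^{⟨d⟩} = C(k_d+1, d+1) + ⋯ + C(k_j+1, j+1)`,
and `0^{⟨d⟩} = 0`. -/
def macaulay : ℕ → ℕ → ℕ
  | _, 0 => 0
  | 0, _ => 0
  | d + 1, a + 1 =>
    let k := Nat.findGreatest (fun k => Nat.choose k (d + 1) ≤ a + 1) (a + d + 2)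
    Nat.choose (k + 1) (d + 2) + macaulay d (a + 1 - Nat.choose k (d + 1))

open Nat

lemma le_choose_add (d j : ℕ) : j ≤ (d + j).choose (d + 1) := by
  induction j with
  | zero => exact Nat.zero_le _
  | succ j ih =>
    have hpos : 0 < (d + j).choose d := choose_pos (by omega)
    have := choose_succ_succ' (d + j) d
    rw [← Nat.add_assoc]
    omega

lemma choose_lt_choose_succ_of_pos {n d : ℕ} (h : 0 < n.choose (d + 1)) :
    n.choose (d + 1) < (n + 1).choose (d + 1) := by
  have hdn : d + 1 ≤ n := by
    by_contra hlt
    exact h.ne' (choose_eq_zero_of_lt (by omega))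
  have hpos : 0 < n.choose d := choose_pos (by omega)
  rw [choose_succ_succ' n d]
  omega

lemma exists_choose_le_lt_choose_succ (d a : ℕ) :
    ∃ k, k.choose (d + 1) ≤ a ∧ a < (k + 1).choose (d + 1) := by
  induction a with
  | zero => exact ⟨d, by simp [choose_succ_self]⟩
  | succ a ih =>
    obtain ⟨k, hle, hlt⟩ := ih
    rcases (show a + 1 ≤ _ from hlt).lt_or_eq with hlt' | heq
    · exact ⟨k, by omega, hlt'⟩
    · refine ⟨k + 1, heq.ge, ?_⟩
      rw [heq]
      exact choose_lt_choose_succ_of_pos (by omega)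

lemma sub_choose_lt_choose {d a k : ℕ} (hle : k.choose (d + 1) ≤ a)
    (hlt : a < (k + 1).choose (d + 1)) : a - k.choose (d + 1) < k.choose d := by
  rw [choose_succ_succ' k d] at hlt
  omega

lemma macaulay_zero_left (a : ℕ) : macaulay 0 a = 0 := by
  cases a <;> rfl

lemma macaulay_zero_right (d : ℕ) : macaulay d 0 = 0 := by
  cases d <;> rfl

lemma macaulay_succ_eq {d a k : ℕ} (hle : k.choose (d + 1) ≤ a)
    (hlt : a < (k + 1).choose (d + 1)) :
    macaulay (d + 1) a = (k + 1).choose (d + 2) + macaulay d (a - k.choose (d + 1)) := by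
  cases a with
  | zero =>
    have hk : k = d := by
      have h1 : d + 1 ≤ k + 1 := by
        by_contra h
        exact hlt.ne' (choose_eq_zero_of_lt (by omega))
      have h2 : k < d + 1 := choose_eq_zero_iff.mp (by omega)
      omega
    subst hk
    simp [macaulay_zero_right, choose_succ_self]
  | succ a =>
    suffices hgreedy :
        Nat.findGreatest (fun j => j.choose (d + 1) ≤ a + 1) (a + d + 2) = k by
      rw [← hgreedy]; rfl
    refine Nat.findGreatest_eq_iff.mpr ⟨?_, fun _ => hle, fun n hkn _ hn => ?_⟩
    · by_contra hbig
      have := (le_choose_add d (a + 2)).trans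
        (choose_le_choose (d + 1) (by omega : d + (a + 2) ≤ k))
      omega
    · have := choose_le_choose (d + 1) (by omega : k + 1 ≤ n)
      omega

lemma macaulay_lt_choose_succ {d a n : ℕ} (h : a < n.choose d) :
    macaulay d a < (n + 1).choose (d + 1) := by
  induction d generalizing a n with
  | zero => simp [macaulay_zero_left]
  | succ d ih =>
    obtain ⟨k, hle, hlt⟩ := exists_choose_le_lt_choose_succ d a
    have hkn : k + 1 ≤ n := by
      by_contra hnk
      have := choose_le_choose (d + 1) (by omega : n ≤ k)
      omega
    have hrem := sub_choose_lt_choose hle hlt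
    have hmono : (k + 2).choose (d + 2) ≤ (n + 1).choose (d + 1 + 1) :=
      choose_le_choose (d + 2) (by omega)
    have hpascal : (k + 2).choose (d + 2) = (k + 1).choose (d + 1) + (k + 1).choose (d + 2) :=
      choose_succ_succ' (k + 1) (d + 1)
    have := ih hrem
    rw [macaulay_succ_eq hle hlt]
    omega

lemma macaulay_lt_macaulay_succ (d a : ℕ) : macaulay (d + 1) a < macaulay (d + 1) (a + 1) := by
  induction d using Nat.strong_induction_on generalizing a with
  | _ d ih =>
    obtain ⟨k, hle, hlt⟩ := exists_choose_le_lt_choose_succ d a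
    rw [macaulay_succ_eq hle hlt]
    rcases (show a + 1 ≤ _ from hlt).lt_or_eq with hlt' | heq
    · rw [macaulay_succ_eq (hle.trans (Nat.le_add_right a 1)) hlt', Nat.sub_add_comm hle]
      apply Nat.add_lt_add_left
      cases d with
      | zero =>
        -- for `d = 0` every block `k ≤ a < k + 1` is a single point
        simp only [Nat.zero_add, choose_one_right] at hle hlt'
        omega
      | succ d => exact ih d d.lt_succ_self _
    · have hnext : a + 1 < (k + 2).choose (d + 1) := by
        rw [heq]
        exact choose_lt_choose_succ_of_pos (by omega)
      have hpascal :
          (k + 1 + 1).choose (d + 2) = (k + 1).choose (d + 1) + (k + 1).choose (d + 2) :=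
        choose_succ_succ' (k + 1) (d + 1)
      have := macaulay_lt_choose_succ (sub_choose_lt_choose hle hlt)
      rw [macaulay_succ_eq heq.ge hnext, ← heq, Nat.sub_self, macaulay_zero_right]
      omega

/-- Macaulay's function is strictly monotone: for nonnegative integers `a`, `b` and a
positive integer `d`, if `a < b` then `a^{⟨d⟩} < b^{⟨d⟩}`. -/
theorem macaulay_strictMono (a b d : ℕ) (hd : 0 < d) (hab : a < b) :
    macaulay d a < macaulay d b := by
  obtain ⟨d, rfl⟩ : ∃ d', d = d' + 1 := ⟨d - 1, by omega⟩
  exact strictMono_nat_of_lt_succ (macaulay_lt_macaulay_succ d) hab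
end

section
/- For positive integers a and b and a positive integer d, one has a < b if and only if the Macaulay d-binomial representation of a is strictly smaller than the Macaulay d-binomial representation of b in the (left) lexicographic order. -/
/-!
For a strictly decreasing tuple with `k_i ≥ i`, Pascal's rule telescopes to
`C(k_d, d) + C(k_{d-1}, d-1) + ⋯ + C(k_j, j) < C(k_d + 1, d)`. Hence at the first position
where two such tuples differ, the larger entry outweighs everything that follows, so the value
is strictly monotone for the lexicographic order; as that order is linear, comparing values is
the same as comparing tuples.
-/

/-- `IsMacaulayRep d a ks` says that the list `ks = [k_d, k_{d-1}, …, k_j]` is a Macaulay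
`d`-binomial representation of `a`, i.e. `k_d > k_{d-1} > ⋯ > k_j ≥ j ≥ 1` (where
`j = d - (length - 1)`) and `a = C(k_d, d) + C(k_{d-1}, d-1) + ⋯ + C(k_j, j)`. -/
def IsMacaulayRep (d a : ℕ) (ks : List ℕ) : Prop :=
  ks ≠ [] ∧ ks.length ≤ d ∧ List.Chain' (· > ·) ks ∧
  d + 1 ≤ ks.getLastD 0 + ks.length ∧
  a = ∑ i ∈ Finset.range ks.length, Nat.choose (ks.getD i 0) (d - i)

namespace Macaulay

def binomialSum : ℕ → List ℕ → ℕ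
  | _, [] => 0
  | e, k :: t => k.choose e + binomialSum (e - 1) t

theorem sum_range_choose_getD_eq_binomialSum (ks : List ℕ) (e : ℕ) :
    ∑ i ∈ Finset.range ks.length, (ks.getD i 0).choose (e - i) = binomialSum e ks := by
  induction ks generalizing e with
  | nil => rfl
  | cons k t ih =>
    simp only [List.length_cons, Finset.sum_range_succ', List.getD_cons_succ,
      List.getD_cons_zero, Nat.sub_zero, binomialSum, ← ih (e - 1), Nat.sub_sub, Nat.add_comm 1]
    ring

/-- The conditions of a Macaulay representation in degree `e`, with the empty list allowed. -/
def IsAdmissible (e : ℕ) (ks : List ℕ) : Prop :=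
  ks.IsChain (· > ·) ∧ ks.length ≤ e ∧ (ks ≠ [] → e + 1 ≤ ks.getLastD 0 + ks.length)

theorem getLastD_add_length_le_of_isChain_gt {k : ℕ} {t : List ℕ}
    (h : (k :: t).IsChain (· > ·)) : (k :: t).getLastD 0 + (k :: t).length ≤ k + 1 := by
  induction t generalizing k with
  | nil => simp
  | cons y t ih =>
    obtain ⟨hyk, hchain⟩ := List.isChain_cons_cons.mp h
    have := ih hchain
    simp only [List.getLastD_cons, List.length_cons] at this ⊢
    omega

namespace IsAdmissible

variable {e k : ℕ} {t : List ℕ}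

theorem pos (h : IsAdmissible e (k :: t)) : 0 < e := by
  have := h.2.1
  simp only [List.length_cons] at this
  omega

theorem le_head (h : IsAdmissible e (k :: t)) : e ≤ k := by
  have := getLastD_add_length_le_of_isChain_gt h.1
  have := h.2.2 (List.cons_ne_nil k t)
  omega

theorem tail (h : IsAdmissible e (k :: t)) : IsAdmissible (e - 1) t := by
  obtain ⟨hchain, hlen, hlast⟩ := h
  refine ⟨hchain.tail, by simp only [List.length_cons] at hlen; omega, fun ht => ?_⟩
  obtain ⟨y, t, rfl⟩ := List.exists_cons_of_ne_nil ht
  have := hlast (List.cons_ne_nil k _)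
  simp only [List.getLastD_cons, List.length_cons] at this ⊢
  omega

theorem binomialSum_lt_choose_succ (h : IsAdmissible e (k :: t)) :
    binomialSum e (k :: t) < (k + 1).choose e := by
  induction t generalizing e k with
  | nil =>
    rw [binomialSum, binomialSum, Nat.choose_succ_left k e h.pos, add_zero]
    exact Nat.lt_add_of_pos_left (Nat.choose_pos (by have := h.le_head; omega))
  | cons y t ih =>
    have hyk : y < k := (List.isChain_cons_cons.mp h.1).1
    calc binomialSum e (k :: y :: t) = k.choose e + binomialSum (e - 1) (y :: t) := rfl
      _ < k.choose e + k.choose (e - 1) :=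
        Nat.add_lt_add_left ((ih h.tail).trans_le (Nat.choose_le_choose _ hyk)) _
      _ = (k + 1).choose e := by rw [Nat.choose_succ_left k e h.pos, add_comm]

end IsAdmissible

theorem strictMonoOn_binomialSum (e : ℕ) :
    StrictMonoOn (binomialSum e) {ks | IsAdmissible e ks} := by
  intro ka hka kb hkb hlex
  induction hlex generalizing e with
  | nil => exact (Nat.choose_pos hkb.le_head).trans_le (Nat.le_add_right _ _)
  | rel hab =>
    calc _ < _ := hka.binomialSum_lt_choose_succ
      _ ≤ _ := Nat.choose_le_choose _ hab
      _ ≤ _ := Nat.le_add_right _ _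
  | cons _ ih =>
    exact Nat.add_lt_add_left (ih _ hka.tail hkb.tail) _

end Macaulay

open Macaulay

theorem IsMacaulayRep.isAdmissible {d a : ℕ} {ks : List ℕ} (h : IsMacaulayRep d a ks) :
    IsAdmissible d ks :=
  ⟨h.2.2.1, h.2.1, fun _ => h.2.2.2.1⟩

theorem IsMacaulayRep.eq_binomialSum {d a : ℕ} {ks : List ℕ} (h : IsMacaulayRep d a ks) :
    a = binomialSum d ks :=
  h.2.2.2.2.trans (sum_range_choose_getD_eq_binomialSum ks d)

theorem macaulay_rep_lt_iff_lex_general (a b d : ℕ)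
    (ka kb : List ℕ) (hka : IsMacaulayRep d a ka) (hkb : IsMacaulayRep d b kb) :
    a < b ↔ List.Lex (· < ·) ka kb := by
  rw [hka.eq_binomialSum, hkb.eq_binomialSum]
  exact (strictMonoOn_binomialSum d).lt_iff_lt hka.isAdmissible hkb.isAdmissible

/-- For positive integers `a`, `b` and a positive integer `d`, one has `a < b` if and only
if the Macaulay `d`-binomial representation of `a` is strictly smaller than that of `b`
in the (left) lexicographic order (where a longer tuple agreeing on a prefix is larger). -/
theorem macaulay_rep_lt_iff_lex (a b d : ℕ) (ha : 0 < a) (hb : 0 < b) (hd : 0 < d)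
    (ka kb : List ℕ) (hka : IsMacaulayRep d a ka) (hkb : IsMacaulayRep d b kb) :
    a < b ↔ List.Lex (· < ·) ka kb :=
  macaulay_rep_lt_iff_lex_general a b d ka kb hka hkb
end

section
/- For all positive integers a and d, there exists a unique nonnegative integer c such that a = C(c - 1 + d, d) + A with 0 < A ≤ C(c - 1 + d, d - 1) for some integer A. -/
/-!
Write `d = e + 1` and `f c = C(c + e, e + 1)`. By Pascal's rule `f (c + 1) = f c + C(c + e, e)`,
so the condition on `c` says exactly `f c < a ≤ f (c + 1)`. Since `f` is monotone, `f 0 = 0 < a`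
and `f` is unbounded, the intervals `(f c, f (c + 1)]` partition the positive integers.
-/

namespace Nat

theorem exists_eq_add_and_pos_and_le_iff {a m k : ℕ} :
    (∃ A, a = m + A ∧ 0 < A ∧ A ≤ k) ↔ m < a ∧ a ≤ m + k :=
  ⟨fun ⟨A, hA, hpos, hle⟩ ↦ by omega, fun ⟨hlt, hle⟩ ↦ ⟨a - m, by omega, by omega, by omega⟩⟩

theorem le_of_lt_of_le_apply_succ {f : ℕ → ℕ} (hf : Monotone f) {a c c' : ℕ}
    (hc' : f c' < a) (hc : a ≤ f (c + 1)) : c' ≤ c := by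
  by_contra! h
  exact absurd (hc.trans (hf h)) (not_le.mpr hc')

theorem existsUnique_lt_and_le_apply_succ {f : ℕ → ℕ} (hf : Monotone f) {a : ℕ}
    (h0 : f 0 < a) (hbdd : ∃ n, a ≤ f n) : ∃! c, f c < a ∧ a ≤ f (c + 1) := by
  have hfind_pos : 0 < Nat.find hbdd := by
    by_contra! h
    exact absurd (Nat.le_zero.mp h ▸ Nat.find_spec hbdd) (not_le.mpr h0)
  have hlt : f (Nat.find hbdd - 1) < a := not_le.mp (Nat.find_min hbdd (by omega))
  have hle : a ≤ f (Nat.find hbdd - 1 + 1) := by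
    simpa [Nat.sub_add_cancel hfind_pos] using Nat.find_spec hbdd
  refine ⟨Nat.find hbdd - 1, ⟨hlt, hle⟩, fun c ⟨hlt', hle'⟩ ↦ ?_⟩
  exact le_antisymm (le_of_lt_of_le_apply_succ hf hlt' hle) (le_of_lt_of_le_apply_succ hf hlt hle')

theorem succ_le_choose_add_succ (n k : ℕ) : n + 1 ≤ (n + 1 + k).choose (k + 1) := by
  calc n + 1 = (n + 1).choose n := (choose_succ_self_right n).symm
    _ ≤ (n + (k + 1)).choose n := choose_le_choose n (by omega)
    _ = (n + 1 + k).choose (k + 1) := by rw [choose_symm_add, show n + (k + 1) = n + 1 + k by omega]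

end Nat

/-- For all positive integers `a` and `d`, there exists a unique nonnegative integer `c`
such that `a = C(c - 1 + d, d) + A` with `0 < A ≤ C(c - 1 + d, d - 1)` for some `A`.
(Since `c` may be `0`, the quantity `c - 1 + d` is rendered as `c + d - 1` in `ℕ`.) -/
theorem exists_unique_form_two (a d : ℕ) (ha : 0 < a) (hd : 0 < d) :
    ∃! c : ℕ, ∃ A : ℕ,
      a = Nat.choose (c + d - 1) d + A ∧ 0 < A ∧ A ≤ Nat.choose (c + d - 1) (d - 1) := by
  obtain ⟨e, rfl⟩ : ∃ e, d = e + 1 := ⟨d - 1, by omega⟩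
  have pascal (c : ℕ) : (c + e).choose (e + 1) + (c + e).choose e = (c + 1 + e).choose (e + 1) := by
    rw [show c + 1 + e = c + e + 1 by omega, Nat.choose_succ_succ', add_comm]
  simp only [← add_assoc, Nat.add_sub_cancel, Nat.exists_eq_add_and_pos_and_le_iff, pascal]
  refine Nat.existsUnique_lt_and_le_apply_succ (f := fun c ↦ (c + e).choose (e + 1))
    (fun m n h ↦ Nat.choose_le_choose _ (by omega)) ?_ ⟨a + 1, ?_⟩
  · simpa [Nat.choose_eq_zero_of_lt] using ha
  · exact (Nat.le_succ a).trans (Nat.succ_le_choose_add_succ a e)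
end
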